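/- arXiv:2507.11766 — 2 statements merged into one kernel-verified Lean document; each statement's English description precedes it below -/
import Mathlib

section
/- A linear map Λ from M_n(ℂ) to M_m(ℂ) is completely positive if and only if its Choi matrix C(Λ) is positive semidefinite. -/
open scoped Kronecker ComplexOrder

/-- The Choi matrix of a linear map `Λ : M_n(ℂ) → M_m(ℂ)`:
`C(Λ) = ∑ i j, Λ(E i j) ⊗ₖ E i j`, a matrix indexed by `Fin m × Fin n`. -/
noncomputable def choi {n m : ℕ}
    (Λ : Matrix (Fin n) (Fin n) ℂ →ₗ[ℂ] Matrix (Fin m) (Fin m) ℂ) :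
    Matrix (Fin m × Fin n) (Fin m × Fin n) ℂ :=
  ∑ i : Fin n, ∑ j : Fin n,
    (Λ (Matrix.single i j 1)) ⊗ₖ (Matrix.single i j 1)

/-- `Λ ⊗ id_N` : the unique linear map with `(Λ ⊗ id_N)(A ⊗ₖ B) = Λ(A) ⊗ₖ B`,
written out explicitly. -/
noncomputable def tensorId {n m : ℕ}
    (Λ : Matrix (Fin n) (Fin n) ℂ →ₗ[ℂ] Matrix (Fin m) (Fin m) ℂ) (N : ℕ)
    (M : Matrix (Fin n × Fin N) (Fin n × Fin N) ℂ) :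
    Matrix (Fin m × Fin N) (Fin m × Fin N) ℂ :=
  Matrix.of fun p q => Λ (Matrix.of fun i j => M (i, p.2) (j, q.2)) p.1 q.1

/-- `Λ` is `N`-positive: `Λ ⊗ id_N` maps PSD matrices to PSD matrices. -/
def NPos {n m : ℕ}
    (Λ : Matrix (Fin n) (Fin n) ℂ →ₗ[ℂ] Matrix (Fin m) (Fin m) ℂ) (N : ℕ) : Prop :=
  ∀ M : Matrix (Fin n × Fin N) (Fin n × Fin N) ℂ,
    M.PosSemidef → (tensorId Λ N M).PosSemidef

/-- `Λ` is completely positive: `N`-positive for every `N ≥ 1`. -/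
def CP {n m : ℕ}
    (Λ : Matrix (Fin n) (Fin n) ℂ →ₗ[ℂ] Matrix (Fin m) (Fin m) ℂ) : Prop :=
  ∀ N : ℕ, 1 ≤ N → NPos Λ N

/-!
Both directions go through the identity `C(Λ)_{(a,i),(c,j)} = Λ(E_{ij})_{ac}`.
If `Λ` is `n`-positive, `C(Λ)` is `Λ ⊗ id_n` applied to the rank-one projection `ωω*` onto the
(unnormalised) maximally entangled vector `ω = ∑ eᵢ ⊗ eᵢ`, hence PSD. Conversely, writing
`C(Λ) = ∑ₖ vₖ vₖ*` and reshaping each `vₖ` into an `m × n` matrix `Kₖ` gives the Kraus form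
`Λ(A) = ∑ₖ Kₖ A Kₖᴴ`, so `(Λ ⊗ id_N)(M) = ∑ₖ (Kₖ ⊗ 1) M (Kₖ ⊗ 1)ᴴ` is PSD whenever `M` is.
-/

open Matrix

section

variable {n m : ℕ} (Λ : Matrix (Fin n) (Fin n) ℂ →ₗ[ℂ] Matrix (Fin m) (Fin m) ℂ)

lemma choi_apply (a c : Fin m) (i j : Fin n) :
    choi Λ (a, i) (c, j) = Λ (single i j 1) a c := by
  simp [choi, Matrix.sum_apply, single, ite_and]

lemma map_apply_eq_sum_choi (A : Matrix (Fin n) (Fin n) ℂ) (a c : Fin m) :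
    Λ A a c = ∑ i, ∑ j, A i j * choi Λ (a, i) (c, j) := by
  have hA : A = ∑ i, ∑ j, A i j • single i j 1 := by simpa using matrix_eq_sum_single A
  conv_lhs => rw [hA]
  simp only [map_sum, map_smul, Matrix.sum_apply, Matrix.smul_apply, smul_eq_mul, choi_apply]

lemma exists_kraus_of_choi_posSemidef (h : (choi Λ).PosSemidef) :
    ∃ (r : ℕ) (K : Fin r → Matrix (Fin m) (Fin n) ℂ),
      ∀ A, Λ A = ∑ k, K k * A * (K k)ᴴ := by
  obtain ⟨r, v, hv⟩ := posSemidef_iff_eq_sum_vecMulVec.mp h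
  refine ⟨r, fun k => of fun a i => v k (a, i), fun A => ?_⟩
  ext a c
  simp only [map_apply_eq_sum_choi, hv, Matrix.sum_apply, vecMulVec_apply, Matrix.mul_apply,
    conjTranspose_apply, of_apply, Pi.star_apply, Finset.mul_sum, Finset.sum_mul]
  rw [Finset.sum_comm_cycle]
  refine Finset.sum_congr rfl fun k _ => Finset.sum_comm.trans ?_
  exact Finset.sum_congr rfl fun j _ => Finset.sum_congr rfl fun i _ => by ring

lemma tensorId_eq_sum_of_kraus {ι : Type*} [Fintype ι] (K : ι → Matrix (Fin m) (Fin n) ℂ)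
    (hK : ∀ A, Λ A = ∑ k, K k * A * (K k)ᴴ) (N : ℕ)
    (M : Matrix (Fin n × Fin N) (Fin n × Fin N) ℂ) :
    tensorId Λ N M = ∑ k,
      (K k ⊗ₖ (1 : Matrix (Fin N) (Fin N) ℂ)) * M * (K k ⊗ₖ (1 : Matrix (Fin N) (Fin N) ℂ))ᴴ := by
  ext ⟨a, s⟩ ⟨c, t⟩
  simp only [tensorId, of_apply, hK, Matrix.sum_apply, Matrix.mul_apply, conjTranspose_apply,
    kroneckerMap_apply, one_apply, Fintype.sum_prod_type, Finset.sum_mul, mul_ite, mul_one,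
    mul_zero, ite_mul, zero_mul, apply_ite star, star_zero, Finset.sum_ite_eq, Finset.mem_univ,
    if_true]

lemma nPos_of_kraus {ι : Type*} [Fintype ι] (K : ι → Matrix (Fin m) (Fin n) ℂ)
    (hK : ∀ A, Λ A = ∑ k, K k * A * (K k)ᴴ) (N : ℕ) : NPos Λ N := fun M hM => by
  rw [tensorId_eq_sum_of_kraus Λ K hK]
  exact posSemidef_sum _ fun k _ => hM.mul_mul_conjTranspose_same _

lemma choi_eq_tensorId :
    choi Λ = tensorId Λ n (vecMulVec (fun p => if p.1 = p.2 then 1 else 0)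
      (star fun p => if p.1 = p.2 then 1 else 0)) := by
  ext ⟨a, i⟩ ⟨c, j⟩
  refine (choi_apply Λ a c i j).trans (congrArg (fun B => Λ B a c) ?_)
  ext i' j'
  simp only [single, vecMulVec_apply, of_apply, Pi.star_apply, apply_ite star, star_one, star_zero,
    ite_mul, one_mul, zero_mul, ite_and, eq_comm]

lemma choi_posSemidef_of_nPos (h : NPos Λ n) : (choi Λ).PosSemidef :=
  choi_eq_tensorId Λ ▸ h _ (posSemidef_vecMulVec_self_star _)

end

/-- `Λ` is completely positive iff its Choi matrix is positive semidefinite. -/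
theorem cp_iff_choi_posSemidef {n m : ℕ}
    (Λ : Matrix (Fin n) (Fin n) ℂ →ₗ[ℂ] Matrix (Fin m) (Fin m) ℂ) :
    CP Λ ↔ (choi Λ).PosSemidef := by
  refine ⟨fun hCP => ?_, fun hC N _ => ?_⟩
  · rcases Nat.eq_zero_or_pos n with rfl | hn
    · exact Subsingleton.elim (0 : Matrix _ _ ℂ) (choi Λ) ▸ PosSemidef.zero
    · exact choi_posSemidef_of_nPos Λ (hCP n hn)
  · obtain ⟨r, K, hK⟩ := exists_kraus_of_choi_posSemidef Λ hC
    exact nPos_of_kraus Λ K hK N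
end

section
/- GKSL necessity (finite dimensions): let Λ : [0,∞) → End(M_n(ℂ)) be a family of completely positive linear maps with Λ(0) = id, and suppose the right derivative ℒ := lim_{t↓0} (Λ(t) − id)/t exists (in the finite-dimensional space of linear endomorphisms of M_n(ℂ)). Then there exist a completely positive linear map Ψ from M_n(ℂ) to itself and Hermitian matrices G, H ∈ M_n(ℂ) such that ℒ(ρ) = Ψ(ρ) − (Gρ + ρG) − i(Hρ − ρH) for all ρ; moreover Ψ, G, H can be chosen so that tr(H) = 0 and Ψ(X) = Σ_k A_k X A_kᴴ with tr(A_k) = 0 for every k. -/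
/-!
Let `ω = flatten 1` be the vectorised identity, so that `choi id = |ω⟩⟨ω|`. For `t > 0` the Choi
matrix of `Λ t` is positive semidefinite, hence `(choi (Λ t) - |ω⟩⟨ω|) / t` is positive
semidefinite on `ω⊥`; this closed condition passes to the limit `choi ℒ`. Compressing `choi ℒ`
by the orthogonal projection onto `ω⊥` splits it as `P + |φ⟩⟨ω| + |ω⟩⟨φ|` with `P ≥ 0` and
`P ω = 0`. Writing `P = Bᴴ B`, the rows of `B` are the vectorised Kraus operators of a map with
Choi matrix `P`, and they are orthogonal to `ω`, i.e. traceless. The rank-two part is the Choi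
matrix of `ρ ↦ K ρ + ρ Kᴴ` with `flatten K = φ`. Writing `K = ℜK + i ℑK` gives `G = -ℜK` and
`H = -ℑK`, and `tr H = 0` because `tr K = ⟨ω, φ⟩` is real.
-/

open scoped Kronecker ComplexOrder Matrix

open Matrix Filter Topology ComplexStarModule

section Choi

variable {n m : ℕ}

theorem choi_apply_s9 (Λ : Matrix (Fin n) (Fin n) ℂ →ₗ[ℂ] Matrix (Fin m) (Fin m) ℂ)
    (p q : Fin m × Fin n) : choi Λ p q = Λ (single p.2 q.2 1) p.1 q.1 := by
  simp [choi, Matrix.sum_apply, single_apply, ite_and]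

theorem choi_injective : Function.Injective (choi (n := n) (m := m)) := by
  intro Λ₁ Λ₂ h
  refine ext_linearMap ℂ fun i j => LinearMap.ext_ring ?_
  ext a b
  simpa [choi_apply_s9] using congr_fun₂ h (a, i) (b, j)

theorem choi_add (Λ₁ Λ₂ : Matrix (Fin n) (Fin n) ℂ →ₗ[ℂ] Matrix (Fin m) (Fin m) ℂ) :
    choi (Λ₁ + Λ₂) = choi Λ₁ + choi Λ₂ := by
  ext; simp [choi_apply_s9]

theorem choi_sub (Λ₁ Λ₂ : Matrix (Fin n) (Fin n) ℂ →ₗ[ℂ] Matrix (Fin m) (Fin m) ℂ) :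
    choi (Λ₁ - Λ₂) = choi Λ₁ - choi Λ₂ := by
  ext; simp [choi_apply_s9]

theorem choi_smul (c : ℂ) (Λ : Matrix (Fin n) (Fin n) ℂ →ₗ[ℂ] Matrix (Fin m) (Fin m) ℂ) :
    choi (c • Λ) = c • choi Λ := by
  ext; simp [choi_apply_s9]

theorem choi_sum {κ : Type*} (s : Finset κ)
    (Λ : κ → Matrix (Fin n) (Fin n) ℂ →ₗ[ℂ] Matrix (Fin m) (Fin m) ℂ) :
    choi (∑ k ∈ s, Λ k) = ∑ k ∈ s, choi (Λ k) := by
  ext; simp [choi_apply_s9, Matrix.sum_apply]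

theorem tendsto_choi {α : Type*} {l : Filter α}
    {Λ : α → Matrix (Fin n) (Fin n) ℂ →ₗ[ℂ] Matrix (Fin m) (Fin m) ℂ}
    {Λ₀ : Matrix (Fin n) (Fin n) ℂ →ₗ[ℂ] Matrix (Fin m) (Fin m) ℂ}
    (h : ∀ ρ, Tendsto (fun a => Λ a ρ) l (𝓝 (Λ₀ ρ))) :
    Tendsto (fun a => choi (Λ a)) l (𝓝 (choi Λ₀)) := by
  refine tendsto_pi_nhds.2 fun p => tendsto_pi_nhds.2 fun q => ?_
  simp only [choi_apply_s9]
  exact tendsto_pi_nhds.1 (tendsto_pi_nhds.1 (h _) p.1) q.1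

end Choi

section Vectorization

/-- Row-major vectorisation, matching the (output, input) indexing of `choi`. -/
def flatten {l k α : Type*} (A : Matrix l k α) : l × k → α := fun p => A p.1 p.2

@[simp]
theorem flatten_apply {l k α : Type*} (A : Matrix l k α) (p : l × k) :
    flatten A p = A p.1 p.2 :=
  rfl

variable {n m : ℕ}

theorem star_flatten_one_dotProduct (A : Matrix (Fin n) (Fin n) ℂ) :
    star (flatten 1) ⬝ᵥ flatten A = A.trace := by
  simp [dotProduct, trace, Fintype.sum_prod_type, one_apply]

theorem choi_mulLeftRight (A B : Matrix (Fin n) (Fin n) ℂ) :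
    choi (LinearMap.mulLeftRight ℂ (A, Bᴴ)) = vecMulVec (flatten A) (star (flatten B)) := by
  ext ⟨a, i⟩ ⟨b, j⟩
  simp [choi_apply_s9, mul_apply, single_apply, vecMulVec_apply, ite_and]

theorem choi_id :
    choi (LinearMap.id : Matrix (Fin n) (Fin n) ℂ →ₗ[ℂ] _) =
      vecMulVec (flatten 1) (star (flatten 1)) := by
  rw [← choi_mulLeftRight, conjTranspose_one]
  congr 1
  ext; simp

theorem tensorId_vecMulVec_flatten_one
    (Λ : Matrix (Fin n) (Fin n) ℂ →ₗ[ℂ] Matrix (Fin m) (Fin m) ℂ) :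
    tensorId Λ n (vecMulVec (flatten 1) (star (flatten 1))) = choi Λ := by
  ext p q
  rw [choi_apply_s9]
  refine congrArg (fun M => Λ M p.1 q.1) ?_
  ext i j
  simp only [vecMulVec_apply, flatten_apply, Pi.star_apply, one_apply, single_apply, of_apply]
  split_ifs <;> simp_all

theorem CP.posSemidef_choi {Λ : Matrix (Fin n) (Fin n) ℂ →ₗ[ℂ] Matrix (Fin m) (Fin m) ℂ}
    (hΛ : CP Λ) : (choi Λ).PosSemidef := by
  rcases Nat.eq_zero_or_pos n with rfl | hn
  · exact Subsingleton.elim (0 : Matrix (Fin m × Fin 0) (Fin m × Fin 0) ℂ) (choi Λ) ▸ .zero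
  · rw [← tensorId_vecMulVec_flatten_one]
    exact hΛ n hn _ (posSemidef_vecMulVec_self_star _)

end Vectorization

section Kraus

variable {n m : ℕ}

theorem tensorId_sum {κ : Type*} (s : Finset κ)
    (Λ : κ → Matrix (Fin n) (Fin n) ℂ →ₗ[ℂ] Matrix (Fin m) (Fin m) ℂ) (N : ℕ)
    (M : Matrix (Fin n × Fin N) (Fin n × Fin N) ℂ) :
    tensorId (∑ k ∈ s, Λ k) N M = ∑ k ∈ s, tensorId (Λ k) N M := by
  ext; simp [tensorId, Matrix.sum_apply]

theorem tensorId_mulLeftRight (A B : Matrix (Fin n) (Fin n) ℂ) (N : ℕ)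
    (M : Matrix (Fin n × Fin N) (Fin n × Fin N) ℂ) :
    tensorId (LinearMap.mulLeftRight ℂ (A, B)) N M =
      (A ⊗ₖ (1 : Matrix (Fin N) (Fin N) ℂ)) * M * (B ⊗ₖ 1) := by
  ext ⟨a, α⟩ ⟨b, β⟩
  simp [tensorId, mul_apply, kroneckerMap_apply, one_apply, Fintype.sum_prod_type,
    Finset.sum_mul]

variable {κ : Type*} [Fintype κ]

def krausMap (A : κ → Matrix (Fin n) (Fin n) ℂ) :
    Matrix (Fin n) (Fin n) ℂ →ₗ[ℂ] Matrix (Fin n) (Fin n) ℂ :=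
  ∑ k, LinearMap.mulLeftRight ℂ (A k, (A k)ᴴ)

theorem krausMap_apply (A : κ → Matrix (Fin n) (Fin n) ℂ) (X : Matrix (Fin n) (Fin n) ℂ) :
    krausMap A X = ∑ k, A k * X * (A k)ᴴ := by
  simp [krausMap]

theorem krausMap_comp_equiv {κ' : Type*} [Fintype κ'] (A : κ → Matrix (Fin n) (Fin n) ℂ)
    (e : κ' ≃ κ) : krausMap (A ∘ e) = krausMap A := by
  simp only [krausMap]
  exact e.sum_comp fun k => LinearMap.mulLeftRight ℂ (A k, (A k)ᴴ)

theorem choi_krausMap (A : κ → Matrix (Fin n) (Fin n) ℂ) :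
    choi (krausMap A) = ∑ k, vecMulVec (flatten (A k)) (star (flatten (A k))) := by
  simp only [krausMap, choi_sum, choi_mulLeftRight]

theorem cp_krausMap (A : κ → Matrix (Fin n) (Fin n) ℂ) : CP (krausMap A) := by
  intro N _ M hM
  simp only [krausMap, tensorId_sum, tensorId_mulLeftRight]
  refine posSemidef_sum _ fun k _ => ?_
  have h := hM.mul_mul_conjTranspose_same (A k ⊗ₖ (1 : Matrix (Fin N) (Fin N) ℂ))
  rwa [conjTranspose_kronecker, conjTranspose_one] at h

theorem Matrix.PosSemidef.exists_choi_krausMap_eq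
    {P : Matrix (Fin n × Fin n) (Fin n × Fin n) ℂ} (hP : P.PosSemidef)
    (hPω : P *ᵥ flatten 1 = 0) :
    ∃ A : Fin n × Fin n → Matrix (Fin n) (Fin n) ℂ,
      choi (krausMap A) = P ∧ ∀ k, (A k).trace = 0 := by
  obtain ⟨B, rfl⟩ := by
    open scoped MatrixOrder in exact CStarAlgebra.nonneg_iff_eq_star_mul_self.mp hP.nonneg
  have hB : B *ᵥ flatten 1 = 0 := by
    rw [← dotProduct_star_self_eq_zero, star_mulVec, ← dotProduct_mulVec, mulVec_mulVec,
      ← star_eq_conjTranspose, hPω, dotProduct_zero]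
  refine ⟨fun k => of (Function.curry (star (B k))), ?_, fun k => ?_⟩
  · rw [choi_krausMap]
    ext p q
    simp [mul_apply, vecMulVec_apply, Matrix.sum_apply, mul_comm]
  · have hBk : B k ⬝ᵥ flatten 1 = 0 := congr_fun hB k
    rw [← star_flatten_one_dotProduct]
    change star (flatten 1) ⬝ᵥ star (B k) = 0
    rw [star_dotProduct_star, hBk, star_zero]

end Kraus

section PosSemidefOnOrthogonal

variable {ι : Type*} [Fintype ι] {ω : ι → ℂ}

/-- The Choi-matrix form of conditional complete positivity. -/
def PosSemidefOnOrthogonal (ω : ι → ℂ) (M : Matrix ι ι ℂ) : Prop :=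
  M.IsHermitian ∧ ∀ x, star ω ⬝ᵥ x = 0 → 0 ≤ star x ⬝ᵥ M *ᵥ x

theorem isClosed_setOf_posSemidefOnOrthogonal (ω : ι → ℂ) :
    IsClosed {M : Matrix ι ι ℂ | PosSemidefOnOrthogonal ω M} := by
  simp only [PosSemidefOnOrthogonal, IsHermitian, Set.ofPred_and, Set.ofPred_forall]
  refine (isClosed_eq continuous_id.matrix_conjTranspose continuous_id).inter <|
    isClosed_iInter fun x => isClosed_iInter fun _ => isClosed_le continuous_const ?_
  exact continuous_const.dotProduct (continuous_id.matrix_mulVec continuous_const)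

theorem Matrix.PosSemidef.posSemidefOnOrthogonal_sub_vecMulVec {P : Matrix ι ι ℂ}
    (hP : P.PosSemidef) : PosSemidefOnOrthogonal ω (P - vecMulVec ω (star ω)) := by
  refine ⟨hP.isHermitian.sub (posSemidef_vecMulVec_self_star ω).isHermitian, fun x hx => ?_⟩
  rw [sub_mulVec, dotProduct_sub, vecMulVec_mulVec, hx]
  simpa using hP.dotProduct_mulVec_nonneg x

theorem PosSemidefOnOrthogonal.smul {M : Matrix ι ι ℂ} (hM : PosSemidefOnOrthogonal ω M)
    {c : ℂ} (hc : 0 ≤ c) : PosSemidefOnOrthogonal ω (c • M) := by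
  refine ⟨hM.1.smul (IsSelfAdjoint.of_nonneg hc), fun x hx => ?_⟩
  rw [smul_mulVec, dotProduct_smul, smul_eq_mul]
  exact mul_nonneg hc (hM.2 x hx)

theorem PosSemidefOnOrthogonal.posSemidef_conjTranspose_mul_mul {M : Matrix ι ι ℂ}
    (hM : PosSemidefOnOrthogonal ω M) {B : Matrix ι ι ℂ} (hB : ∀ x, star ω ⬝ᵥ B *ᵥ x = 0) :
    (Bᴴ * M * B).PosSemidef := by
  refine .of_dotProduct_mulVec_nonneg (isHermitian_conjTranspose_mul_mul B hM.1) fun x => ?_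
  simpa only [star_mulVec, dotProduct_mulVec, vecMul_vecMul, ← mulVec_mulVec] using
    hM.2 (B *ᵥ x) (hB x)

variable [DecidableEq ι] (ω)

/-- For `ω = 0` the junk value `0⁻¹ = 0` still gives the right projection, `1`. -/
noncomputable def orthogonalProj : Matrix ι ι ℂ := 1 - (star ω ⬝ᵥ ω)⁻¹ • vecMulVec ω (star ω)

theorem conjTranspose_orthogonalProj : (orthogonalProj ω)ᴴ = orthogonalProj ω := by
  have hr : star (star ω ⬝ᵥ ω) = star ω ⬝ᵥ ω :=
    IsSelfAdjoint.of_nonneg (dotProduct_star_self_nonneg ω)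
  simp [orthogonalProj, conjTranspose_sub, conjTranspose_smul, hr]

theorem orthogonalProj_mulVec (x : ι → ℂ) :
    orthogonalProj ω *ᵥ x = x - ((star ω ⬝ᵥ ω)⁻¹ * (star ω ⬝ᵥ x)) • ω := by
  simp [orthogonalProj, sub_mulVec, smul_mulVec, vecMulVec_mulVec, smul_smul]

theorem star_dotProduct_orthogonalProj_mulVec (x : ι → ℂ) :
    star ω ⬝ᵥ orthogonalProj ω *ᵥ x = 0 := by
  rcases eq_or_ne ω 0 with rfl | hω
  · simp
  · have hr : star ω ⬝ᵥ ω ≠ 0 := dotProduct_star_self_eq_zero.not.2 hω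
    rw [orthogonalProj_mulVec, dotProduct_sub, dotProduct_smul, smul_eq_mul, mul_comm,
      ← mul_assoc, mul_inv_cancel₀ hr, one_mul, sub_self]

theorem orthogonalProj_mulVec_self : orthogonalProj ω *ᵥ ω = 0 := by
  rcases eq_or_ne ω 0 with rfl | hω
  · simp
  · rw [orthogonalProj_mulVec, inv_mul_cancel₀ (dotProduct_star_self_eq_zero.not.2 hω),
      one_smul, sub_self]

variable {ω}

theorem PosSemidefOnOrthogonal.exists_eq_add_vecMulVec {M : Matrix ι ι ℂ}
    (hM : PosSemidefOnOrthogonal ω M) :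
    ∃ (P : Matrix ι ι ℂ) (φ : ι → ℂ), P.PosSemidef ∧ P *ᵥ ω = 0 ∧
      IsSelfAdjoint (star ω ⬝ᵥ φ) ∧ M = P + vecMulVec φ (star ω) + vecMulVec ω (star φ) := by
  have hr : IsSelfAdjoint (star ω ⬝ᵥ ω) := .of_nonneg (dotProduct_star_self_nonneg ω)
  have hs : IsSelfAdjoint (star ω ⬝ᵥ M *ᵥ ω) :=
    Complex.conj_eq_iff_im.2 (hM.1.im_star_dotProduct_mulVec_self ω)
  have hs' : star (M *ᵥ ω) ⬝ᵥ ω = star ω ⬝ᵥ M *ᵥ ω := by rw [star_dotProduct, hs.star_eq]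
  have hMω : star ω ᵥ* M = star (M *ᵥ ω) := by rw [star_mulVec, hM.1.eq]
  refine ⟨(orthogonalProj ω)ᴴ * M * orthogonalProj ω,
    (star ω ⬝ᵥ ω)⁻¹ • M *ᵥ ω - ((star ω ⬝ᵥ M *ᵥ ω) / (2 * (star ω ⬝ᵥ ω) ^ 2)) • ω,
    hM.posSemidef_conjTranspose_mul_mul (star_dotProduct_orthogonalProj_mulVec ω), ?_, ?_, ?_⟩
  · rw [← mulVec_mulVec, orthogonalProj_mulVec_self, mulVec_zero]
  · rw [dotProduct_sub, dotProduct_smul, dotProduct_smul, smul_eq_mul, smul_eq_mul]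
    exact (hr.inv₀.mul hs).sub ((hs.div ((IsSelfAdjoint.ofNat 2).mul (hr.pow 2))).mul hr)
  · rw [conjTranspose_orthogonalProj, orthogonalProj]
    simp only [sub_mul, mul_sub, one_mul, mul_one, Matrix.smul_mul, Matrix.mul_smul, vecMulVec_mul,
      mul_vecMulVec, sub_vecMulVec, vecMulVec_sub, smul_vecMulVec, vecMulVec_smul, star_sub,
      star_smul, hMω, smul_mulVec, vecMulVec_mulVec, op_smul_eq_smul, hs', star_inv₀, star_div₀,
      star_mul', star_pow, star_ofNat, hr.star_eq, hs.star_eq]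
    module

end PosSemidefOnOrthogonal

theorem posSemidefOnOrthogonal_choi_of_tendsto {n : ℕ}
    {Λ : ℝ → (Matrix (Fin n) (Fin n) ℂ →ₗ[ℂ] Matrix (Fin n) (Fin n) ℂ)}
    {ℒ : Matrix (Fin n) (Fin n) ℂ →ₗ[ℂ] Matrix (Fin n) (Fin n) ℂ} (hCP : ∀ t > 0, CP (Λ t))
    (hderiv : ∀ ρ, Tendsto (fun t : ℝ => (t : ℂ)⁻¹ • (Λ t ρ - ρ)) (𝓝[>] 0) (𝓝 (ℒ ρ))) :
    PosSemidefOnOrthogonal (flatten 1) (choi ℒ) := by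
  have hlim : Tendsto (fun t : ℝ => (t : ℂ)⁻¹ • (choi (Λ t) - choi LinearMap.id)) (𝓝[>] 0)
      (𝓝 (choi ℒ)) := by
    simp_rw [← choi_sub, ← choi_smul]
    exact tendsto_choi fun ρ => by simpa using hderiv ρ
  refine (isClosed_setOf_posSemidefOnOrthogonal _).mem_of_tendsto hlim ?_
  filter_upwards [self_mem_nhdsWithin] with t (ht : 0 < t)
  rw [choi_id]
  refine (hCP t ht).posSemidef_choi.posSemidefOnOrthogonal_sub_vecMulVec.smul ?_
  rw [← Complex.ofReal_inv]
  exact Complex.zero_le_real.2 (inv_nonneg.2 ht.le)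

theorem mul_add_mul_star_eq {A : Type*} [Ring A] [StarRing A] [Module ℂ A] [StarModule ℂ A]
    [IsScalarTower ℂ A A] [SMulCommClass ℂ A A] (K ρ : A) :
    K * ρ + ρ * star K = (ℜ K * ρ + ρ * ℜ K) + Complex.I • (ℑ K * ρ - ρ * ℑ K) := by
  have hK := realPart_add_I_smul_imaginaryPart K
  generalize ℜ K = a, ℑ K = b at hK ⊢
  subst hK
  simp only [star_add, star_smul, a.2.star_eq, b.2.star_eq, Complex.star_def, Complex.conj_I,
    add_mul, mul_add, smul_mul_assoc, mul_smul_comm]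
  module

theorem trace_imaginaryPart_eq_zero {ι : Type*} [Fintype ι] {K : Matrix ι ι ℂ}
    (hK : IsSelfAdjoint K.trace) : (ℑ K : Matrix ι ι ℂ).trace = 0 := by
  rw [imaginaryPart_apply_coe, trace_smul, trace_smul, trace_sub, star_eq_conjTranspose,
    trace_conjTranspose, hK.star_eq, sub_self, smul_zero, smul_zero]

theorem gksl_necessity_general {n : ℕ}
    (Λ : ℝ → (Matrix (Fin n) (Fin n) ℂ →ₗ[ℂ] Matrix (Fin n) (Fin n) ℂ))
    (hCP : ∀ t : ℝ, 0 ≤ t → CP (Λ t))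
    (ℒ : Matrix (Fin n) (Fin n) ℂ →ₗ[ℂ] Matrix (Fin n) (Fin n) ℂ)
    (hderiv : ∀ ρ : Matrix (Fin n) (Fin n) ℂ,
      Filter.Tendsto (fun t : ℝ => (t : ℂ)⁻¹ • (Λ t ρ - ρ))
        (nhdsWithin 0 (Set.Ioi 0)) (nhds (ℒ ρ))) :
    ∃ (Ψ : Matrix (Fin n) (Fin n) ℂ →ₗ[ℂ] Matrix (Fin n) (Fin n) ℂ)
      (G H : Matrix (Fin n) (Fin n) ℂ),
      CP Ψ ∧ G.IsHermitian ∧ H.IsHermitian ∧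
      (∀ ρ : Matrix (Fin n) (Fin n) ℂ,
        ℒ ρ = Ψ ρ - (G * ρ + ρ * G) - Complex.I • (H * ρ - ρ * H)) ∧
      H.trace = 0 ∧
      ∃ A : Fin (n * n) → Matrix (Fin n) (Fin n) ℂ,
        (∀ X : Matrix (Fin n) (Fin n) ℂ, Ψ X = ∑ k : Fin (n * n), A k * X * (A k)ᴴ) ∧
        ∀ k : Fin (n * n), (A k).trace = 0 := by
  have hC := posSemidefOnOrthogonal_choi_of_tendsto (fun t ht => hCP t ht.le) hderiv
  obtain ⟨P, φ, hP, hPω, hφ, hchoi⟩ := hC.exists_eq_add_vecMulVec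
  obtain ⟨A, hA, hAtr⟩ := hP.exists_choi_krausMap_eq hPω
  set K : Matrix (Fin n) (Fin n) ℂ := of (Function.curry φ)
  have hKφ : flatten K = φ := rfl
  have hℒ : ℒ = krausMap A + LinearMap.mulLeftRight ℂ (K, 1ᴴ) +
      LinearMap.mulLeftRight ℂ (1, Kᴴ) :=
    choi_injective <| by
      rw [choi_add, choi_add, choi_mulLeftRight, choi_mulLeftRight, hA, hKφ, hchoi]
  have htrK : IsSelfAdjoint K.trace := star_flatten_one_dotProduct K ▸ hφ
  refine ⟨krausMap (A ∘ finProdFinEquiv.symm), -ℜ K, -ℑ K, cp_krausMap _, (ℜ K).2.neg,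
    (ℑ K).2.neg, fun ρ => ?_, by rw [trace_neg, trace_imaginaryPart_eq_zero htrK, neg_zero],
    A ∘ finProdFinEquiv.symm, krausMap_apply _, fun k => hAtr _⟩
  rw [krausMap_comp_equiv, hℒ]
  simp only [LinearMap.add_apply, LinearMap.mulLeftRight_apply, conjTranspose_one, mul_one,
    one_mul]
  rw [add_assoc, ← star_eq_conjTranspose, mul_add_mul_star_eq]
  simp only [neg_mul, mul_neg]
  module

/-- GKSL necessity, finite dimensions: if `Λ(t)` is a family of completely
positive maps with `Λ(0) = id` whose right derivative `ℒ` at `t = 0` exists, then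
`ℒ = L(Ψ,G,H)` for some completely positive `Ψ` and Hermitian `G`, `H`; moreover `Ψ`, `G`,
`H` can be chosen so that `tr H = 0` and `Ψ` has a Kraus presentation with traceless
Kraus operators. -/
theorem gksl_necessity {n : ℕ}
    (Λ : ℝ → (Matrix (Fin n) (Fin n) ℂ →ₗ[ℂ] Matrix (Fin n) (Fin n) ℂ))
    (hCP : ∀ t : ℝ, 0 ≤ t → CP (Λ t))
    (h0 : Λ 0 = LinearMap.id)
    (ℒ : Matrix (Fin n) (Fin n) ℂ →ₗ[ℂ] Matrix (Fin n) (Fin n) ℂ)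
    (hderiv : ∀ ρ : Matrix (Fin n) (Fin n) ℂ,
      Filter.Tendsto (fun t : ℝ => (t : ℂ)⁻¹ • (Λ t ρ - ρ))
        (nhdsWithin 0 (Set.Ioi 0)) (nhds (ℒ ρ))) :
    ∃ (Ψ : Matrix (Fin n) (Fin n) ℂ →ₗ[ℂ] Matrix (Fin n) (Fin n) ℂ)
      (G H : Matrix (Fin n) (Fin n) ℂ),
      CP Ψ ∧ G.IsHermitian ∧ H.IsHermitian ∧
      (∀ ρ : Matrix (Fin n) (Fin n) ℂ,
        ℒ ρ = Ψ ρ - (G * ρ + ρ * G) - Complex.I • (H * ρ - ρ * H)) ∧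
      H.trace = 0 ∧
      ∃ A : Fin (n * n) → Matrix (Fin n) (Fin n) ℂ,
        (∀ X : Matrix (Fin n) (Fin n) ℂ, Ψ X = ∑ k : Fin (n * n), A k * X * (A k)ᴴ) ∧
        ∀ k : Fin (n * n), (A k).trace = 0 :=
  gksl_necessity_general Λ hCP ℒ hderiv
end
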